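/- arXiv:math/0502568 — 3 statements merged into one kernel-verified Lean document; each statement's English description precedes it below -/
import Mathlib

section
/- Let n ≥ 1, let V : ℝⁿ → ℝ be C^∞, let E_c ∈ ℝ, and assume the energy surface Σ = {(x,ξ) ∈ ℝⁿ × ℝⁿ : ‖ξ‖² + V(x) = E_c} is compact. Then there exists T > 0, depending only on V and E_c, with the following property: for every differentiable curve γ = (x,ξ) : ℝ → ℝⁿ × ℝⁿ satisfying the Hamiltonian equations x'(t) = 2ξ(t) and ξ'(t) = −∇V(x(t)) for all t ∈ ℝ, taking all its values in Σ, and such that (2ξ(0), −∇V(x(0))) ≠ (0,0) (i.e. γ(0) is not an equilibrium of the Hamiltonian vector field), one has γ(t) ≠ γ(0) for every t with 0 < |t| < T. -/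
open MeasureTheory

set_option maxHeartbeats 1000000 in
/-- For a smooth potential `V` on `ℝⁿ` with compact energy surface
`Σ = {(x,ξ) : ‖ξ‖² + V x = E_c}`, there is a `T > 0` (depending only on `V` and `E_c`)
such that any non-equilibrium solution of the Hamiltonian system `x' = 2ξ`, `ξ' = -∇V(x)`
lying in `Σ` does not return to its initial point in time `0 < |t| < T`. -/
theorem minimal_period_at_critical_energy
    (n : ℕ) (hn : 1 ≤ n) (V : EuclideanSpace ℝ (Fin n) → ℝ)
    (hV : ContDiff ℝ (⊤ : ℕ∞) V) (Ec : ℝ)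
    (hcomp : IsCompact {z : EuclideanSpace ℝ (Fin n) × EuclideanSpace ℝ (Fin n) |
      ‖z.2‖ ^ 2 + V z.1 = Ec}) :
    ∃ T > (0 : ℝ), ∀ x ξ : ℝ → EuclideanSpace ℝ (Fin n),
      (∀ t : ℝ, HasDerivAt x ((2 : ℝ) • ξ t) t) →
      (∀ t : ℝ, HasDerivAt ξ (-(gradient V (x t))) t) →
      (∀ t : ℝ, ‖ξ t‖ ^ 2 + V (x t) = Ec) →
      ((2 : ℝ) • ξ 0, -(gradient V (x 0))) ≠ (0, 0) →
      ∀ t : ℝ, 0 < |t| → |t| < T → (x t, ξ t) ≠ (x 0, ξ 0) := by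
  classical
  set g : EuclideanSpace ℝ (Fin n) → EuclideanSpace ℝ (Fin n) := gradient V with hgdef
  set W : EuclideanSpace ℝ (Fin n) → (EuclideanSpace ℝ (Fin n) →L[ℝ] ℝ) := fderiv ℝ V
    with hWdef
  have hW : ContDiff ℝ 1 W := hV.fderiv_right (by exact WithTop.coe_le_coe.mpr le_top)
  have hgW : ∀ z w : EuclideanSpace ℝ (Fin n), ‖g z - g w‖ = ‖W z - W w‖ := by
    intro z w
    show ‖(InnerProductSpace.toDual ℝ _).symm (fderiv ℝ V z) -
          (InnerProductSpace.toDual ℝ _).symm (fderiv ℝ V w)‖ = _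
    rw [← map_sub, LinearIsometryEquiv.norm_map]
  have hgc : Continuous g := by
    rw [hgdef]
    exact (InnerProductSpace.toDual ℝ _).symm.continuous.comp hW.continuous
  -- the Hamiltonian vector field
  set F : EuclideanSpace ℝ (Fin n) × EuclideanSpace ℝ (Fin n) →
      EuclideanSpace ℝ (Fin n) × EuclideanSpace ℝ (Fin n) :=
    fun z => ((2 : ℝ) • z.2, -g z.1) with hFdef
  have hFc : Continuous F := by
    apply Continuous.prodMk
    · exact continuous_snd.const_smul (2 : ℝ)
    · exact (hgc.comp continuous_fst).neg
  -- a big ball containing the energy surface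
  obtain ⟨R, hR⟩ := hcomp.isBounded.subset_closedBall
    (0 : EuclideanSpace ℝ (Fin n) × EuclideanSpace ℝ (Fin n))
  -- Lipschitz constant
  obtain ⟨L0, hL0⟩ := (isCompact_closedBall (0 : EuclideanSpace ℝ (Fin n)) R)
    |>.exists_bound_of_continuousOn (hW.continuous_fderiv one_ne_zero).continuousOn
  set L : ℝ := max L0 0 + 2 with hLdef
  have hL2 : (2 : ℝ) ≤ L := by
    have := le_max_right L0 (0 : ℝ); linarith
  have hLpos : (0 : ℝ) < L := by linarith
  have hWlip : ∀ z ∈ Metric.closedBall (0 : EuclideanSpace ℝ (Fin n)) R,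
      ∀ w ∈ Metric.closedBall (0 : EuclideanSpace ℝ (Fin n)) R,
      ‖W z - W w‖ ≤ max L0 0 * ‖z - w‖ := by
    intro z hz w hw
    exact (convex_closedBall _ _).norm_image_sub_le_of_norm_fderiv_le
      (fun u _ => (hW.differentiable one_ne_zero).differentiableAt)
      (fun u hu => (hL0 u hu).trans (le_max_left _ _)) hw hz
  have hFlip : ∀ z ∈ Metric.closedBall
        (0 : EuclideanSpace ℝ (Fin n) × EuclideanSpace ℝ (Fin n)) R,
      ∀ w ∈ Metric.closedBall
        (0 : EuclideanSpace ℝ (Fin n) × EuclideanSpace ℝ (Fin n)) R,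
      ‖F z - F w‖ ≤ L * ‖z - w‖ := by
    intro z hz w hw
    have hz1 : z.1 ∈ Metric.closedBall (0 : EuclideanSpace ℝ (Fin n)) R := by
      rw [Metric.mem_closedBall, dist_zero_right] at hz ⊢
      exact (norm_fst_le z).trans hz
    have hw1 : w.1 ∈ Metric.closedBall (0 : EuclideanSpace ℝ (Fin n)) R := by
      rw [Metric.mem_closedBall, dist_zero_right] at hw ⊢
      exact (norm_fst_le w).trans hw
    have h1 : ‖(F z - F w).1‖ ≤ L * ‖z - w‖ := by
      have e1 : (F z - F w).1 = (2 : ℝ) • (z.2 - w.2) := by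
        simp only [hFdef, Prod.fst_sub, smul_sub]
      rw [e1, norm_smul]
      have h2 : ‖z.2 - w.2‖ ≤ ‖z - w‖ := norm_snd_le (z - w)
      have : ‖(2 : ℝ)‖ = 2 := by norm_num
      rw [this]
      nlinarith [norm_nonneg (z - w), norm_nonneg (z.2 - w.2)]
    have h2 : ‖(F z - F w).2‖ ≤ L * ‖z - w‖ := by
      have e2 : (F z - F w).2 = -(g z.1 - g w.1) := by
        simp only [hFdef, Prod.snd_sub]
        abel
      rw [e2, norm_neg, hgW]
      have h3 : ‖W z.1 - W w.1‖ ≤ max L0 0 * ‖z.1 - w.1‖ := hWlip _ hz1 _ hw1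
      have h4 : ‖z.1 - w.1‖ ≤ ‖z - w‖ := norm_fst_le (z - w)
      have h5 : max L0 0 ≤ L := by rw [hLdef]; linarith
      have h6 : (0:ℝ) ≤ max L0 0 := le_max_right _ _
      nlinarith [norm_nonneg (z - w), norm_nonneg (z.1 - w.1)]
    calc ‖F z - F w‖ = max ‖(F z - F w).1‖ ‖(F z - F w).2‖ := rfl
      _ ≤ L * ‖z - w‖ := max_le h1 h2
  refine ⟨1 / L, by positivity, ?_⟩
  intro x ξ hx hξ hEn hne t htpos htT heq
  set γ : ℝ → EuclideanSpace ℝ (Fin n) × EuclideanSpace ℝ (Fin n) :=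
    fun s => (x s, ξ s) with hγdef
  have hγ : ∀ s, HasDerivAt γ (F (γ s)) s := fun s => (hx s).prodMk (hξ s)
  have hmemB : ∀ s, γ s ∈ Metric.closedBall
      (0 : EuclideanSpace ℝ (Fin n) × EuclideanSpace ℝ (Fin n)) R :=
    fun s => hR (hEn s)
  have hγcont : Continuous γ := continuous_iff_continuousAt.mpr fun s => (hγ s).continuousAt
  have ht0 : t ≠ 0 := by
    intro h; rw [h] at htpos; simp at htpos
  set a : ℝ := min t 0 with hadef
  set b : ℝ := max t 0 with hbdef
  have hab : a < b := min_lt_max.mpr ht0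
  have hba : b - a = |t| := by
    rcases le_total t 0 with h | h
    · rw [hadef, hbdef, min_eq_left h, max_eq_right h, abs_of_nonpos h]; ring
    · rw [hadef, hbdef, min_eq_right h, max_eq_left h, abs_of_nonneg h]; ring
  have hγt0 : γ t = γ 0 := by
    simp only [hγdef]
    exact heq
  have hγab : γ b = γ a := by
    rcases le_total t 0 with h | h
    · rw [hadef, hbdef, min_eq_left h, max_eq_right h, hγt0]
    · rw [hadef, hbdef, min_eq_right h, max_eq_left h, hγt0]
  have h0mem : (0 : ℝ) ∈ Set.Icc a b := ⟨min_le_right _ _, le_max_right _ _⟩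
  have hamem : a ∈ Set.Icc a b := ⟨le_rfl, hab.le⟩
  have hbmem : b ∈ Set.Icc a b := ⟨hab.le, le_rfl⟩
  obtain ⟨ts, hts, htsmax⟩ := isCompact_Icc.exists_isMaxOn (Set.nonempty_Icc.mpr hab.le)
    ((hFc.comp hγcont).norm.continuousOn)
  set m : ℝ := ‖F (γ ts)‖ with hmdef
  have hsb : ∀ s ∈ Set.Icc a b, ‖F (γ s)‖ ≤ m := fun s hs => htsmax hs
  have hne' : F (γ 0) ≠ 0 := by
    simp only [hFdef, hγdef, hgdef]
    rw [← Prod.mk_zero_zero]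
    exact hne
  have hm : 0 < m := lt_of_lt_of_le (norm_pos_iff.mpr hne') (hsb 0 h0mem)
  obtain ⟨ℓ, hℓ1, hℓv⟩ := exists_dual_vector ℝ (F (γ ts)) hm.ne'
  have hℓv' : ℓ (F (γ ts)) = m := by
    rw [hℓv]; simp [hmdef]
  -- the curve is m-Lipschitz on [a, b]
  have hcl : ∀ u ∈ Set.Icc a b, ∀ s ∈ Set.Icc a b, ‖γ s - γ u‖ ≤ m * ‖s - u‖ :=
    fun u hu s hs => (convex_Icc a b).norm_image_sub_le_of_norm_hasDerivWithin_le
      (fun r _ => (hγ r).hasDerivWithinAt) hsb hu hs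
  -- wrap-around bound
  have hwrap : ∀ s ∈ Set.Icc a b, ‖γ s - γ ts‖ ≤ m * ((b - a) / 2) := by
    intro s hs
    rcases le_or_gt |s - ts| ((b - a) / 2) with h | h
    · have h1 := hcl ts hts s hs
      rw [Real.norm_eq_abs] at h1
      nlinarith [hm.le]
    · rcases le_total s ts with hsts | hsts
      · have h1 : ‖γ s - γ a‖ ≤ m * ‖s - a‖ := hcl a hamem s hs
        have h2 : ‖γ b - γ ts‖ ≤ m * ‖b - ts‖ := hcl ts hts b hbmem
        have heqv : γ s - γ ts = (γ s - γ a) + (γ b - γ ts) := by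
          rw [hγab]; abel
        have h3 : |s - ts| = ts - s := by
          rw [abs_of_nonpos (by linarith)]; ring
        rw [h3] at h
        rw [Real.norm_eq_abs, abs_of_nonneg (by linarith [hs.1])] at h1
        rw [Real.norm_eq_abs, abs_of_nonneg (by linarith [hts.2])] at h2
        calc ‖γ s - γ ts‖ ≤ ‖γ s - γ a‖ + ‖γ b - γ ts‖ := by
              rw [heqv]; exact norm_add_le _ _
          _ ≤ m * (s - a) + m * (b - ts) := add_le_add h1 h2
          _ ≤ m * ((b - a) / 2) := by nlinarith [hm.le]
      · have h1 : ‖γ s - γ b‖ ≤ m * ‖s - b‖ := hcl b hbmem s hs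
        have h2 : ‖γ a - γ ts‖ ≤ m * ‖a - ts‖ := hcl ts hts a hamem
        have heqv : γ s - γ ts = (γ s - γ b) + (γ a - γ ts) := by
          rw [hγab]; abel
        have h3 : |s - ts| = s - ts := abs_of_nonneg (by linarith)
        rw [h3] at h
        rw [Real.norm_eq_abs, abs_of_nonpos (by linarith [hs.2]), neg_sub] at h1
        rw [Real.norm_eq_abs, abs_of_nonpos (by linarith [hts.1]), neg_sub] at h2
        calc ‖γ s - γ ts‖ ≤ ‖γ s - γ b‖ + ‖γ a - γ ts‖ := by
              rw [heqv]; exact norm_add_le _ _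
          _ ≤ m * (b - s) + m * (ts - a) := add_le_add h1 h2
          _ ≤ m * ((b - a) / 2) := by nlinarith [hm.le]
  -- the period is too short
  have hLba : L * (b - a) < 1 := by
    have h1 : b - a < 1 / L := by rw [hba]; exact htT
    calc L * (b - a) < L * (1 / L) := by
          exact mul_lt_mul_of_pos_left h1 hLpos
      _ = 1 := by field_simp
  -- pointwise lower bound on the integrand
  have hpt : ∀ s ∈ Set.Icc a b, m / 2 ≤ ℓ (F (γ s)) := by
    intro s hs
    have h1 : ‖F (γ s) - F (γ ts)‖ ≤ L * ‖γ s - γ ts‖ := hFlip _ (hmemB s) _ (hmemB ts)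
    have h2 := hwrap s hs
    have h3 : |ℓ (F (γ s) - F (γ ts))| ≤ L * (m * ((b - a) / 2)) := by
      calc |ℓ (F (γ s) - F (γ ts))| = ‖ℓ (F (γ s) - F (γ ts))‖ := (Real.norm_eq_abs _).symm
        _ ≤ ‖ℓ‖ * ‖F (γ s) - F (γ ts)‖ := ℓ.le_opNorm _
        _ = ‖F (γ s) - F (γ ts)‖ := by rw [hℓ1, one_mul]
        _ ≤ L * ‖γ s - γ ts‖ := h1
        _ ≤ L * (m * ((b - a) / 2)) := mul_le_mul_of_nonneg_left h2 hLpos.le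
    have h4 : ℓ (F (γ s)) = ℓ (F (γ ts)) + ℓ (F (γ s) - F (γ ts)) := by
      rw [← map_add]
      congr 1
      abel
    rw [h4, hℓv']
    have h5 := (abs_le.mp h3).1
    have h6 : L * (m * ((b - a) / 2)) ≤ m / 2 := by
      have he : L * (m * ((b - a) / 2)) = (L * (b - a)) * (m / 2) := by ring
      rw [he]
      calc (L * (b - a)) * (m / 2) ≤ 1 * (m / 2) :=
            mul_le_mul_of_nonneg_right hLba.le (by positivity)
        _ = m / 2 := one_mul _
    linarith only [h5, h6]
  -- integrate
  have hint : IntervalIntegrable (fun s => ℓ (F (γ s))) volume a b :=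
    (ℓ.continuous.comp (hFc.comp hγcont)).intervalIntegrable a b
  have hderiv : ∀ s ∈ Set.uIcc a b, HasDerivAt (fun u => ℓ (γ u)) (ℓ (F (γ s))) s :=
    fun s _ => ℓ.hasFDerivAt.comp_hasDerivAt s (hγ s)
  have hI : (∫ s in a..b, ℓ (F (γ s))) = ℓ (γ b) - ℓ (γ a) :=
    intervalIntegral.integral_eq_sub_of_hasDerivAt hderiv hint
  have hI0 : (∫ s in a..b, ℓ (F (γ s))) = 0 := by
    rw [hI, hγab, sub_self]
  have hlow : (b - a) * m / 2 ≤ ∫ s in a..b, ℓ (F (γ s)) := by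
    have hconst : IntervalIntegrable (fun _ : ℝ => m / 2) volume a b :=
      intervalIntegrable_const
    have := intervalIntegral.integral_mono_on hab.le hconst hint hpt
    simpa [smul_eq_mul] using this
  have hposint : (0 : ℝ) < (b - a) * m / 2 := by
    have := mul_pos (sub_pos.mpr hab) (half_pos hm)
    linarith only [this]
  linarith only [hlow, hI0, hposint]
end

section
/- Let a : ℝ → ℂ be a Schwartz function and let c > 0. Then the function M : ℝ → ℂ defined by M(y) = ∫_0^∞ t^{c+iy−1} a(t) dt (which is absolutely convergent for every y ∈ ℝ) is a Schwartz function of y ∈ ℝ; in particular y ↦ M(y) belongs to L¹(ℝ). -/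
/-!
The substitution `t = exp (-x)` turns the Mellin transform on the line `Re z = c` at height `y`
into the Fourier transform, at `y / 2π`, of `G x = exp (-c x) • a (exp (-x))`. Functions of the
shape `x ↦ exp (s x) • f (exp (-x))` with `s < 0` and `f` Schwartz decay rapidly: at `+∞` because
of the weight, at `-∞` because `f` decays faster than any power of `exp (-x)`. Their derivatives
are again combinations of such functions (with `s - 1` and `f'`), so `G` is a Schwartz function,
hence so is its Fourier transform.
-/

open MeasureTheory Real
open Asymptotics Filter Topology
open scoped Nat ContDiff FourierTransform SchwartzMap

section ExpSubst

variable {E : Type*} [NormedAddCommGroup E] [NormedSpace ℝ E]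

noncomputable def expSubst (s : ℝ) (f : ℝ → E) (x : ℝ) : E := exp (s * x) • f (exp (-x))

lemma contDiff_expSubst (s : ℝ) (f : SchwartzMap ℝ E) : ContDiff ℝ ∞ (expSubst s f) :=
  (contDiff_exp.comp (contDiff_const.mul contDiff_id)).smul
    ((f.smooth ⊤).comp (contDiff_exp.comp contDiff_neg) :)

lemma deriv_expSubst (s : ℝ) (f : SchwartzMap ℝ E) :
    deriv (expSubst s f) = s • expSubst s f - expSubst (s - 1) (SchwartzMap.derivCLM ℝ E f) := by
  funext x
  have hexp : HasDerivAt (fun x : ℝ => exp (-x)) (-exp (-x)) x := by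
    simpa using (hasDerivAt_neg x).exp
  have hw : HasDerivAt (fun x : ℝ => exp (s * x)) (exp (s * x) * s) x := by
    simpa [mul_comm] using ((hasDerivAt_id x).const_mul s).exp
  have h : HasDerivAt (expSubst s f) _ x := hw.smul ((f.hasDerivAt (exp (-x))).scomp x hexp)
  rw [h.deriv]
  simp only [expSubst, Pi.sub_apply, Pi.smul_apply, SchwartzMap.derivCLM_apply, smul_smul,
    sub_mul, one_mul, exp_sub, exp_neg]
  module

lemma pow_mul_exp_neg_mul_le_factorial {r x : ℝ} (hr : 0 < r) (hx : 0 ≤ x) (k : ℕ) :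
    x ^ k * exp (-(r * x)) ≤ k ! / r ^ k := by
  have h := pow_div_factorial_le_exp (r * x) (mul_nonneg hr.le hx) k
  rw [div_le_iff₀ (by positivity)] at h
  rw [le_div_iff₀ (by positivity), exp_neg, mul_right_comm, ← div_eq_mul_inv,
    div_le_iff₀ (exp_pos _), mul_comm, ← mul_pow]
  linarith

lemma exists_bound_pow_mul_norm_expSubst {s : ℝ} (hs : s < 0) (f : SchwartzMap ℝ E) (k : ℕ) :
    ∃ C, ∀ x, ‖x‖ ^ k * ‖expSubst s f x‖ ≤ C := by
  have hs' : 0 < -s := neg_pos.2 hs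
  set m := ⌈-s⌉₊
  set C₀ := SchwartzMap.seminorm ℝ 0 0 f
  set C₁ := SchwartzMap.seminorm ℝ (m + 1) 0 f
  refine ⟨k ! / (-s) ^ k * C₀ + k ! * C₁, fun x => ?_⟩
  have hnorm : ‖expSubst s f x‖ = exp (s * x) * ‖f (exp (-x))‖ := by
    rw [expSubst, norm_smul, norm_of_nonneg (exp_pos _).le]
  have hC₀ : 0 ≤ k ! / (-s) ^ k * C₀ := by positivity
  have hC₁ : 0 ≤ k ! * C₁ := by positivity
  rw [hnorm]
  rcases le_or_gt 0 x with hx | hx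
  · calc ‖x‖ ^ k * (exp (s * x) * ‖f (exp (-x))‖)
          = x ^ k * exp (-(-s * x)) * ‖f (exp (-x))‖ := by
            rw [norm_of_nonneg hx, neg_mul, neg_neg, mul_assoc]
        _ ≤ k ! / (-s) ^ k * C₀ :=
            mul_le_mul (pow_mul_exp_neg_mul_le_factorial hs' hx k)
              (f.norm_le_seminorm ℝ _) (norm_nonneg _) (by positivity)
        _ ≤ _ := le_add_of_nonneg_right hC₁
  · have hpow : (-x) ^ k ≤ k ! * exp (-x) := by
      have := pow_div_factorial_le_exp (-x) (by linarith) k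
      rwa [div_le_iff₀ (by positivity), mul_comm] at this
    have hweight : exp (s * x) ≤ exp (m * -x) :=
      exp_le_exp.2 (by nlinarith [Nat.le_ceil (-s)])
    calc ‖x‖ ^ k * (exp (s * x) * ‖f (exp (-x))‖)
          ≤ (k ! * exp (-x)) * (exp (m * -x) * ‖f (exp (-x))‖) := by
            rw [norm_eq_abs, abs_of_neg hx]
            gcongr
        _ = k ! * (‖exp (-x)‖ ^ (m + 1) * ‖f (exp (-x))‖) := by
            rw [norm_of_nonneg (exp_pos _).le, pow_succ, ← exp_nat_mul]
            ring
        _ ≤ k ! * C₁ := by gcongr; exact f.norm_pow_mul_le_seminorm ℝ _ _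
        _ ≤ _ := le_add_of_nonneg_left hC₀

lemma exists_bound_pow_mul_norm_iteratedDeriv_expSubst (n k : ℕ) {s : ℝ} (hs : s < 0)
    (f : SchwartzMap ℝ E) : ∃ C, ∀ x, ‖x‖ ^ k * ‖iteratedDeriv n (expSubst s f) x‖ ≤ C := by
  induction n generalizing s f with
  | zero => simpa using exists_bound_pow_mul_norm_expSubst hs f k
  | succ n ih =>
    obtain ⟨C₁, hC₁⟩ := ih hs f
    obtain ⟨C₂, hC₂⟩ := ih (by linarith : s - 1 < 0) (SchwartzMap.derivCLM ℝ E f)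
    refine ⟨‖s‖ * C₁ + C₂, fun x => ?_⟩
    have hsmooth (s : ℝ) (f : SchwartzMap ℝ E) : ContDiffAt ℝ n (expSubst s f) x :=
      (contDiff_expSubst s f).contDiffAt.of_le (by exact_mod_cast le_top)
    rw [iteratedDeriv_succ', deriv_expSubst,
      iteratedDeriv_sub (f := s • _) ((hsmooth s f).const_smul s) (hsmooth _ _),
      iteratedDeriv_const_smul (hsmooth s f)]
    calc ‖x‖ ^ k * ‖s • iteratedDeriv n (expSubst s f) x
            - iteratedDeriv n (expSubst (s - 1) (SchwartzMap.derivCLM ℝ E f)) x‖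
        ≤ ‖s‖ * (‖x‖ ^ k * ‖iteratedDeriv n (expSubst s f) x‖)
            + ‖x‖ ^ k * ‖iteratedDeriv n (expSubst (s - 1) (SchwartzMap.derivCLM ℝ E f)) x‖ := by
          grw [norm_sub_le, norm_smul]
          linarith
      _ ≤ ‖s‖ * C₁ + C₂ := by gcongr <;> simp only [hC₁, hC₂]

noncomputable def SchwartzMap.expSubst {s : ℝ} (hs : s < 0) (f : SchwartzMap ℝ E) :
    SchwartzMap ℝ E where
  toFun := _root_.expSubst s f
  smooth' := contDiff_expSubst s f
  decay' k n := by
    simpa only [norm_iteratedFDeriv_eq_norm_iteratedDeriv] using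
      exists_bound_pow_mul_norm_iteratedDeriv_expSubst n k hs f

@[simp]
lemma SchwartzMap.coe_expSubst {s : ℝ} (hs : s < 0) (f : SchwartzMap ℝ E) :
    ⇑(f.expSubst hs) = _root_.expSubst s f :=
  rfl

end ExpSubst

section Mellin

variable {E : Type*} [NormedAddCommGroup E] [NormedSpace ℂ E]

open Complex in
lemma mellin_ofReal_add_I_mul_eq_fourier_expSubst (f : ℝ → E) (c y : ℝ) :
    mellin f (c + I * y) = 𝓕 (expSubst (-c) f) (y / (2 * π)) := by
  have : expSubst (-c) f = fun u => Real.exp (-(c + I * y).re * u) • f (Real.exp (-u)) := by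
    simp [expSubst, funext_iff]
  rw [this, mellin_eq_fourier]
  simp

lemma SchwartzMap.mellinConvergent (f : 𝓢(ℝ, E)) {s : ℂ} (hs : 0 < s.re) :
    MellinConvergent f s := by
  have htop : (f : ℝ → E) =O[atTop] (· ^ (-(s.re + 1))) :=
    ((f.isBigO_cocompact_rpow (-(s.re + 1))).mono atTop_le_cocompact).congr' .rfl <|
      (eventually_gt_atTop 0).mono fun t ht => by simp [abs_of_pos ht]
  have hbot : (f : ℝ → E) =O[𝓝[>] 0] (· ^ (-(0 : ℝ))) := by
    simpa using ((f.continuous.tendsto 0).mono_left nhdsWithin_le_nhds).isBigO_one ℝ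
  exact mellinConvergent_of_isBigO_rpow (f.continuous.locallyIntegrable.locallyIntegrableOn _)
    htop (by linarith) hbot hs

noncomputable def SchwartzMap.mellinVerticalLine (f : 𝓢(ℝ, E)) {c : ℝ} (hc : 0 < c) : 𝓢(ℝ, E) :=
  compCLMOfContinuousLinearEquiv ℂ
    (ContinuousLinearEquiv.unitsEquivAut ℝ (Units.mk0 (2 * π)⁻¹ (by positivity)))
    (𝓕 (f.expSubst (neg_lt_zero.2 hc)))

open Complex in
lemma SchwartzMap.mellinVerticalLine_apply (f : 𝓢(ℝ, E)) {c : ℝ} (hc : 0 < c) (y : ℝ) :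
    f.mellinVerticalLine hc y = mellin f (c + I * y) := by
  rw [mellin_ofReal_add_I_mul_eq_fourier_expSubst]
  simp [mellinVerticalLine, fourier_coe, div_eq_mul_inv]

end Mellin

/-- For a Schwartz function `a : ℝ → ℂ` and `c > 0`, the Mellin transform
restricted to the vertical line `Re z = c`, `M(y) = ∫_0^∞ t^{c+iy-1} a(t) dt`, is absolutely
convergent for every `y`, defines a Schwartz function of `y`, and in particular belongs
to `L¹(ℝ)`. -/
theorem mellin_transform_on_vertical_line_schwartz
    (a : SchwartzMap ℝ ℂ) (c : ℝ) (hc : 0 < c) :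
    (∀ y : ℝ, IntegrableOn
        (fun t : ℝ => (t : ℂ) ^ ((c : ℂ) + Complex.I * (y : ℝ) - 1) * a t)
        (Set.Ioi (0 : ℝ))) ∧
    (∃ M : SchwartzMap ℝ ℂ, ∀ y : ℝ,
        M y = ∫ t in Set.Ioi (0 : ℝ),
          (t : ℂ) ^ ((c : ℂ) + Complex.I * (y : ℝ) - 1) * a t) ∧
    Integrable (fun y : ℝ => ∫ t in Set.Ioi (0 : ℝ),
        (t : ℂ) ^ ((c : ℂ) + Complex.I * (y : ℝ) - 1) * a t) := by
  have hM (y : ℝ) := a.mellinVerticalLine_apply hc y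
  refine ⟨fun y => a.mellinConvergent (by simpa using hc), ⟨_, hM⟩, ?_⟩
  exact (a.mellinVerticalLine hc).integrable.congr (ae_of_all _ hM)
end

section
/- Let k ≥ 1 be an integer and let f : [1,∞) × [0,∞) → ℂ be a compactly supported function that is smooth up to the boundary. Then for every z ∈ ℂ with 0 < Re z < 1/(2k), both of the following integrals converge absolutely and one has ∫_1^∞ ∫_0^∞ (s−1)^{−z} q^{−2kz} f(s,q) dq ds = (−1/𝔟₀(z)) ∫_1^∞ ∫_0^∞ (s−1)^{1−z} q^{2k(1−z)} (∂_s ∂_q^{2k} f)(s,q) dq ds, where 𝔟₀(z) = (1−z) ∏_{j=1}^{2k} (j − 2kz). -/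
open MeasureTheory Set Filter

namespace BernsteinIBP

local notation "ℕ∞∞" => ((⊤ : ℕ∞) : WithTop ℕ∞)

lemma le_inf : (1 : WithTop ℕ∞) ≤ ((⊤:ℕ∞) : WithTop ℕ∞) := by exact_mod_cast le_top
lemma succ_le_inf : ((⊤:ℕ∞) : WithTop ℕ∞) + 1 ≤ ((⊤:ℕ∞) : WithTop ℕ∞) := by exact_mod_cast le_top

/-- Smoothness of the partial derivative in the second variable. -/
lemma pderiv_snd_contDiff (H : ℝ × ℝ → ℂ) (h : ContDiff ℝ (⊤:ℕ∞) H) :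
    ContDiff ℝ (⊤:ℕ∞) (fun p : ℝ × ℝ => deriv (fun q => H (p.1, q)) p.2) := by
  have key : ∀ p : ℝ × ℝ, deriv (fun q => H (p.1, q)) p.2 = fderiv ℝ H p (0, 1) := by
    intro p
    have h1 : HasDerivAt (fun q : ℝ => ((p.1, q) : ℝ × ℝ)) (0, 1) p.2 :=
      (hasDerivAt_const p.2 p.1).prodMk (hasDerivAt_id p.2)
    have h2 : HasFDerivAt H (fderiv ℝ H p) p := (h.differentiable (by simp) p).hasFDerivAt
    exact (h2.comp_hasDerivAt p.2 h1).deriv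
  rw [show (fun p : ℝ × ℝ => deriv (fun q => H (p.1, q)) p.2)
      = fun p => fderiv ℝ H p (0,1) from funext key]
  exact (h.fderiv_right succ_le_inf).clm_apply contDiff_const

/-- Smoothness of the partial derivative in the first variable. -/
lemma pderiv_fst_contDiff (H : ℝ × ℝ → ℂ) (h : ContDiff ℝ (⊤:ℕ∞) H) :
    ContDiff ℝ (⊤:ℕ∞) (fun p : ℝ × ℝ => deriv (fun s => H (s, p.2)) p.1) := by
  have key : ∀ p : ℝ × ℝ, deriv (fun s => H (s, p.2)) p.1 = fderiv ℝ H p (1, 0) := by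
    intro p
    have h1 : HasDerivAt (fun s : ℝ => ((s, p.2) : ℝ × ℝ)) (1, 0) p.1 :=
      (hasDerivAt_id p.1).prodMk (hasDerivAt_const p.1 p.2)
    have h2 : HasFDerivAt H (fderiv ℝ H p) p := (h.differentiable (by simp) p).hasFDerivAt
    exact (h2.comp_hasDerivAt p.1 h1).deriv
  rw [show (fun p : ℝ × ℝ => deriv (fun s => H (s, p.2)) p.1)
      = fun p => fderiv ℝ H p (1,0) from funext key]
  exact (h.fderiv_right succ_le_inf).clm_apply contDiff_const

lemma pderiv_snd_support (H : ℝ × ℝ → ℂ) (hs : HasCompactSupport H) :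
    HasCompactSupport (fun p : ℝ × ℝ => deriv (fun q => H (p.1, q)) p.2) := by
  apply HasCompactSupport.intro hs
  intro p hp
  have h0 : H =ᶠ[nhds p] 0 := notMem_tsupport_iff_eventuallyEq.mp hp
  have hcont : Tendsto (fun q : ℝ => ((p.1, q) : ℝ × ℝ)) (nhds p.2) (nhds p) :=
    (Continuous.tendsto (by fun_prop) p.2)
  have h1 : (fun q : ℝ => H (p.1, q)) =ᶠ[nhds p.2] (fun _ => (0:ℂ)) := h0.comp_tendsto hcont
  rw [h1.deriv_eq, deriv_const]

lemma pderiv_fst_support (H : ℝ × ℝ → ℂ) (hs : HasCompactSupport H) :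
    HasCompactSupport (fun p : ℝ × ℝ => deriv (fun s => H (s, p.2)) p.1) := by
  apply HasCompactSupport.intro hs
  intro p hp
  have h0 : H =ᶠ[nhds p] 0 := notMem_tsupport_iff_eventuallyEq.mp hp
  have hcont : Tendsto (fun s : ℝ => ((s, p.2) : ℝ × ℝ)) (nhds p.1) (nhds p) :=
    (Continuous.tendsto (by fun_prop) p.1)
  have h1 : (fun s : ℝ => H (s, p.2)) =ᶠ[nhds p.1] (fun _ => (0:ℂ)) := h0.comp_tendsto hcont
  rw [h1.deriv_eq, deriv_const]

lemma iterDeriv_snd_contDiff (n : ℕ) :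
    ∀ (H : ℝ × ℝ → ℂ), ContDiff ℝ (⊤:ℕ∞) H →
      ContDiff ℝ (⊤:ℕ∞) (fun p : ℝ × ℝ => iteratedDeriv n (fun q => H (p.1, q)) p.2) := by
  induction n with
  | zero => intro H h; simpa [iteratedDeriv_zero] using h
  | succ n ih =>
    intro H h
    have := ih (fun p : ℝ × ℝ => deriv (fun q => H (p.1, q)) p.2) (pderiv_snd_contDiff H h)
    simp only [iteratedDeriv_succ']
    exact this

lemma iterDeriv_snd_support (n : ℕ) :
    ∀ (H : ℝ × ℝ → ℂ), HasCompactSupport H →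
      HasCompactSupport (fun p : ℝ × ℝ => iteratedDeriv n (fun q => H (p.1, q)) p.2) := by
  induction n with
  | zero => intro H h; simpa [iteratedDeriv_zero] using h
  | succ n ih =>
    intro H h
    have := ih (fun p : ℝ × ℝ => deriv (fun q => H (p.1, q)) p.2) (pderiv_snd_support H h)
    simp only [iteratedDeriv_succ']
    exact this

lemma slice_snd_contDiff (H : ℝ × ℝ → ℂ) (h : ContDiff ℝ (⊤:ℕ∞) H) (s : ℝ) :
    ContDiff ℝ (⊤:ℕ∞) (fun q : ℝ => H (s, q)) :=
  h.comp (contDiff_const.prodMk contDiff_id)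

lemma slice_fst_contDiff (H : ℝ × ℝ → ℂ) (h : ContDiff ℝ (⊤:ℕ∞) H) (q : ℝ) :
    ContDiff ℝ (⊤:ℕ∞) (fun s : ℝ => H (s, q)) :=
  h.comp (contDiff_id.prodMk contDiff_const)

lemma slice_snd_support (H : ℝ × ℝ → ℂ) (hs : HasCompactSupport H) (s : ℝ) :
    HasCompactSupport (fun q : ℝ => H (s, q)) := by
  apply HasCompactSupport.intro (hs.image continuous_snd)
  intro q hq
  exact image_eq_zero_of_notMem_tsupport (fun hmem => hq ⟨(s, q), hmem, rfl⟩)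

lemma slice_fst_support (H : ℝ × ℝ → ℂ) (hs : HasCompactSupport H) (q : ℝ) :
    HasCompactSupport (fun s : ℝ => H (s, q)) := by
  apply HasCompactSupport.intro (hs.image continuous_fst)
  intro s hsx
  exact image_eq_zero_of_notMem_tsupport (fun hmem => hsx ⟨(s, q), hmem, rfl⟩)

lemma contDiff_iteratedDeriv (n : ℕ) {g : ℝ → ℂ} (hg : ContDiff ℝ (⊤:ℕ∞) g) :
    ContDiff ℝ (⊤:ℕ∞) (iteratedDeriv n g) := by
  rw [iteratedDeriv_eq_iterate]
  exact hg.iterate_deriv n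

lemma support_iteratedDeriv (n : ℕ) {g : ℝ → ℂ} (hg : HasCompactSupport g) :
    HasCompactSupport (iteratedDeriv n g) := by
  induction n with
  | zero => simpa [iteratedDeriv_zero] using hg
  | succ n ih => rw [iteratedDeriv_succ]; exact ih.deriv

/-- 1D integrability of `(x - c)^α * g x` on `Ioi c` for `Re α > -1`. -/
lemma integrableOn_cpow_mul (c : ℝ) (α : ℂ) (hα : -1 < α.re)
    {g : ℝ → ℂ} (hg : Continuous g) (hgs : HasCompactSupport g) :
    IntegrableOn (fun x : ℝ => ((x - c : ℝ) : ℂ) ^ α * g x) (Set.Ioi c) := by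
  obtain ⟨r, hr⟩ := hgs.isBounded.subset_closedBall 0
  set R : ℝ := max r c + 1 with hRdef
  have hcR : c < R := lt_of_le_of_lt (le_max_right _ _) (lt_add_one _)
  have hzero : ∀ x : ℝ, R < x → g x = 0 := by
    intro x hx
    apply image_eq_zero_of_notMem_tsupport
    intro hmem
    have h1 : |x| ≤ r := by simpa [Real.dist_eq] using hr hmem
    have h2 : x ≤ r := (le_abs_self x).trans h1
    have : r < x := lt_of_le_of_lt (le_trans (le_max_left r c) (le_of_lt (lt_add_one _))) hx
    linarith
  have h1 : IntegrableOn (fun x : ℝ => ((x - c : ℝ) : ℂ) ^ α) (Set.Ioc c R) := by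
    have h0 := (intervalIntegral.intervalIntegrable_cpow' (a := 0) (b := R - c) hα).comp_sub_right c
    rw [zero_add, sub_add_cancel] at h0
    exact (intervalIntegrable_iff_integrableOn_Ioc_of_le hcR.le).mp h0
  have h2 : IntegrableOn (fun x : ℝ => ((x - c : ℝ) : ℂ) ^ α * g x) (Set.Ioc c R) := by
    obtain ⟨C, hC⟩ := hgs.exists_bound_of_continuous hg
    have := h1.bdd_mul hg.aestronglyMeasurable (ae_of_all _ hC)
    exact this.congr (ae_of_all _ fun x => by ring)
  have h3 : IntegrableOn (fun x : ℝ => ((x - c : ℝ) : ℂ) ^ α * g x) (Set.Ioi R) := by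
    refine (integrableOn_congr_fun (fun x hx => ?_) measurableSet_Ioi).mpr integrableOn_zero
    rw [hzero x hx, mul_zero]
  have := h2.union h3
  rwa [Set.Ioc_union_Ioi_eq_Ioi hcR.le] at this

/-- The basic 1D integration by parts on `Ioi c` with vanishing boundary terms. -/
lemma ibp (c : ℝ) (a : ℂ) (ha : 0 < a.re) {g : ℝ → ℂ}
    (hg : ContDiff ℝ (⊤:ℕ∞) g) (hgs : HasCompactSupport g) :
    ∫ x in Set.Ioi c, ((x - c : ℝ) : ℂ) ^ a * deriv g x
      = -a * ∫ x in Set.Ioi c, ((x - c : ℝ) : ℂ) ^ (a - 1) * g x := by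
  have ha0 : a ≠ 0 := fun h => by simp [h] at ha
  have hgd : Differentiable ℝ g := hg.differentiable (by simp)
  have hderiv : ∀ x ∈ Set.Ioi c, HasDerivAt (fun x : ℝ => ((x - c : ℝ) : ℂ) ^ a * g x)
      (a * ((x - c : ℝ) : ℂ) ^ (a - 1) * g x + ((x - c : ℝ) : ℂ) ^ a * deriv g x) x := by
    intro x hx
    have hxc : x - c ≠ 0 := sub_ne_zero.mpr (ne_of_gt hx)
    have hne : (a - 1) ≠ -1 := fun h => ha0 (by linear_combination h)
    have h0 := (hasDerivAt_ofReal_cpow_const' hxc hne).const_mul a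
    simp only [sub_add_cancel] at h0
    have heq : (fun y : ℝ => a * ((y : ℂ) ^ a / a)) = fun y : ℝ => ((y : ℝ) : ℂ) ^ a := by
      funext y; field_simp
    rw [heq] at h0
    have h1 : HasDerivAt (fun x : ℝ => ((x - c : ℝ) : ℂ) ^ a)
        (a * ((x - c : ℝ) : ℂ) ^ (a - 1)) x := by
      exact h0.comp_sub_const x c
    exact h1.mul (hgd x).hasDerivAt
  have hi1 : IntegrableOn (fun x : ℝ => ((x - c : ℝ) : ℂ) ^ (a - 1) * g x) (Set.Ioi c) :=
    integrableOn_cpow_mul c (a - 1) (by rw [Complex.sub_re, Complex.one_re]; linarith) hg.continuous hgs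
  have hi1' : IntegrableOn (fun x : ℝ => a * (((x - c : ℝ) : ℂ) ^ (a - 1) * g x)) (Set.Ioi c) :=
    hi1.const_mul a
  have hi2 : IntegrableOn (fun x : ℝ => ((x - c : ℝ) : ℂ) ^ a * deriv g x) (Set.Ioi c) :=
    integrableOn_cpow_mul c a (by linarith) (hg.continuous_deriv le_inf) hgs.deriv
  have hint : IntegrableOn (fun x : ℝ =>
      a * ((x - c : ℝ) : ℂ) ^ (a - 1) * g x + ((x - c : ℝ) : ℂ) ^ a * deriv g x) (Set.Ioi c) := by
    have := hi1'.add hi2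
    exact this.congr (ae_of_all _ fun x => by simp only [Pi.add_apply]; ring)
  have hcont : ContinuousWithinAt (fun x : ℝ => ((x - c : ℝ) : ℂ) ^ a * g x) (Set.Ici c) c := by
    apply ContinuousAt.continuousWithinAt
    have hc1 : ContinuousAt (fun x : ℝ => ((x - c : ℝ) : ℂ) ^ a) c :=
      (Complex.continuousAt_ofReal_cpow_const 0 a (Or.inl ha)).comp_of_eq
        (continuousAt_id.sub continuousAt_const) (by simp)
    exact hc1.mul hg.continuous.continuousAt
  have htend : Tendsto (fun x : ℝ => ((x - c : ℝ) : ℂ) ^ a * g x) atTop (nhds 0) := by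
    obtain ⟨r, hr⟩ := hgs.isBounded.subset_closedBall 0
    apply Tendsto.congr' (f₁ := fun _ : ℝ => (0:ℂ)) _ tendsto_const_nhds
    filter_upwards [eventually_gt_atTop r] with x hx
    have : g x = 0 := by
      apply image_eq_zero_of_notMem_tsupport
      intro hmem
      have h1 : |x| ≤ r := by simpa [Real.dist_eq] using hr hmem
      linarith [(le_abs_self x).trans h1]
    rw [this, mul_zero]
  have hkey := integral_Ioi_of_hasDerivAt_of_tendsto hcont hderiv hint htend
  simp only [sub_self, Complex.ofReal_zero, Complex.zero_cpow ha0, zero_mul, zero_sub, neg_zero]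
    at hkey
  have hsplit : ∫ x in Set.Ioi c,
        (a * ((x - c : ℝ) : ℂ) ^ (a - 1) * g x + ((x - c : ℝ) : ℂ) ^ a * deriv g x)
      = (∫ x in Set.Ioi c, a * (((x - c : ℝ) : ℂ) ^ (a - 1) * g x))
        + ∫ x in Set.Ioi c, ((x - c : ℝ) : ℂ) ^ a * deriv g x := by
    rw [← integral_add hi1' hi2]
    congr 1; funext x; ring
  rw [hsplit, integral_const_mul] at hkey
  linear_combination hkey


/-- `ibp` at `c = 0` with the plain coercion form. -/
lemma ibp0 (a : ℂ) (ha : 0 < a.re) {g : ℝ → ℂ}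
    (hg : ContDiff ℝ (⊤:ℕ∞) g) (hgs : HasCompactSupport g) :
    ∫ x in Set.Ioi (0:ℝ), ((x : ℝ) : ℂ) ^ a * deriv g x
      = -a * ∫ x in Set.Ioi (0:ℝ), ((x : ℝ) : ℂ) ^ (a - 1) * g x := by
  have := ibp 0 a ha hg hgs
  simpa only [sub_zero] using this

/-- Iterated integration by parts on `Ioi 0`. -/
lemma iter_ibp (n : ℕ) : ∀ (a : ℂ), (n : ℝ) - 1 < a.re → ∀ {g : ℝ → ℂ},
    ContDiff ℝ (⊤:ℕ∞) g → HasCompactSupport g →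
    ∫ x in Set.Ioi (0:ℝ), ((x : ℝ) : ℂ) ^ a * iteratedDeriv n g x
      = ((-1)^n * ∏ j ∈ Finset.Icc 1 n, (a - n + j)) *
          ∫ x in Set.Ioi (0:ℝ), ((x : ℝ) : ℂ) ^ (a - n) * g x := by
  induction n with
  | zero => intro a ha g hg hgs; simp [iteratedDeriv_zero]
  | succ n ih =>
    intro a ha g hg hgs
    have hcast : ((n : ℝ) : ℝ) ≤ (((n:ℕ) + 1 : ℕ) : ℝ) - 1 := by push_cast; linarith
    have han : (n : ℝ) < a.re := by push_cast at ha ⊢; linarith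
    have ha0 : 0 < a.re := lt_of_le_of_lt (n.cast_nonneg) han
    have h1 := ibp0 a ha0 (contDiff_iteratedDeriv n hg) (support_iteratedDeriv n hgs)
    have h2 := ih (a - 1) (by rw [Complex.sub_re, Complex.one_re]; linarith) hg hgs
    rw [iteratedDeriv_succ, h1, h2]
    have hexp : a - 1 - (n : ℂ) = a - ((n : ℕ) + 1 : ℕ) := by push_cast; ring
    rw [hexp]
    have hprod : ∏ j ∈ Finset.Icc 1 (n+1), (a - ((n:ℕ)+1:ℕ) + j)
        = (∏ j ∈ Finset.Icc 1 n, (a - ((n:ℕ)+1:ℕ) + j)) * a := by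
      rw [Finset.prod_Icc_succ_top (Nat.one_le_iff_ne_zero.mpr (Nat.succ_ne_zero n))]
      congr 1
      push_cast; ring
    rw [hprod, pow_succ]
    ring

/-- 2D integrability of `(s-1)^α q^β h(s,q)` on `Ioi 1 ×ˢ Ioi 0`. -/
lemma int2d (α β : ℂ) (hα : -1 < α.re) (hβ : -1 < β.re)
    {h : ℝ × ℝ → ℂ} (hc : Continuous h) (hs : HasCompactSupport h) :
    IntegrableOn (fun p : ℝ × ℝ => ((p.1 - 1 : ℝ) : ℂ) ^ α * ((p.2 : ℝ) : ℂ) ^ β * h p)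
      (Set.Ioi (1:ℝ) ×ˢ Set.Ioi (0:ℝ)) := by
  obtain ⟨r, hr⟩ := hs.isBounded.subset_closedBall 0
  set R : ℝ := max r 1 + 1 with hRdef
  have hR1 : (1:ℝ) < R := lt_of_le_of_lt (le_max_right _ _) (lt_add_one _)
  have hR0 : (0:ℝ) < R := by linarith
  have hzero : ∀ p : ℝ × ℝ, R < p.1 ∨ R < p.2 → h p = 0 := by
    intro p hp
    apply image_eq_zero_of_notMem_tsupport
    intro hmem
    have := hr hmem
    rw [Metric.mem_closedBall, Prod.dist_eq] at this
    have h1 : dist p.1 0 ≤ r := le_trans (le_max_left _ _) this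
    have h2 : dist p.2 0 ≤ r := le_trans (le_max_right _ _) this
    rw [Real.dist_eq, sub_zero] at h1 h2
    have hrR : r < R := lt_of_le_of_lt (le_max_left _ _) (lt_add_one _)
    rcases hp with hp | hp
    · linarith [(le_abs_self p.1).trans h1]
    · linarith [(le_abs_self p.2).trans h2]
  have h1 : IntegrableOn (fun s : ℝ => ((s - 1 : ℝ) : ℂ) ^ α) (Set.Ioc 1 R) := by
    have h0 := (intervalIntegral.intervalIntegrable_cpow' (a := 0) (b := R - 1) hα).comp_sub_right 1
    rw [zero_add, sub_add_cancel] at h0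
    exact (intervalIntegrable_iff_integrableOn_Ioc_of_le hR1.le).mp h0
  have h2 : IntegrableOn (fun q : ℝ => ((q : ℝ) : ℂ) ^ β) (Set.Ioc 0 R) :=
    (intervalIntegrable_iff_integrableOn_Ioc_of_le hR0.le).mp
      (intervalIntegral.intervalIntegrable_cpow' hβ)
  have hψ : IntegrableOn (fun p : ℝ × ℝ => ((p.1 - 1 : ℝ) : ℂ) ^ α * ((p.2 : ℝ) : ℂ) ^ β)
      (Set.Ioc 1 R ×ˢ Set.Ioc 0 R) := by
    rw [IntegrableOn, Measure.volume_eq_prod, ← Measure.prod_restrict]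
    exact h1.mul_prod h2
  have hΦS : IntegrableOn (fun p : ℝ × ℝ => ((p.1 - 1 : ℝ) : ℂ) ^ α * ((p.2 : ℝ) : ℂ) ^ β * h p)
      (Set.Ioc 1 R ×ˢ Set.Ioc 0 R) := by
    obtain ⟨C, hC⟩ := hs.exists_bound_of_continuous hc
    have := hψ.bdd_mul hc.aestronglyMeasurable (ae_of_all _ hC)
    exact this.congr (ae_of_all _ fun p => by ring)
  have hdiff : IntegrableOn (fun p : ℝ × ℝ => ((p.1 - 1 : ℝ) : ℂ) ^ α * ((p.2 : ℝ) : ℂ) ^ β * h p)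
      ((Set.Ioi (1:ℝ) ×ˢ Set.Ioi (0:ℝ)) \ (Set.Ioc 1 R ×ˢ Set.Ioc 0 R)) := by
    refine (integrableOn_congr_fun (fun p hp => ?_) ?_).mpr integrableOn_zero
    · obtain ⟨⟨hp1, hp2⟩, hpns⟩ := hp
      have hor : R < p.1 ∨ R < p.2 := by
        by_contra hcon
        push_neg at hcon
        exact hpns (Set.mem_prod.mpr ⟨Set.mem_Ioc.mpr ⟨Set.mem_Ioi.mp hp1, hcon.1⟩,
          Set.mem_Ioc.mpr ⟨Set.mem_Ioi.mp hp2, hcon.2⟩⟩)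
      rw [hzero p hor, mul_zero]
    · exact ((measurableSet_Ioi.prod measurableSet_Ioi).diff
        (measurableSet_Ioc.prod measurableSet_Ioc))
  have hun := hΦS.union hdiff
  apply hun.mono_set
  intro p hp
  by_cases hpS : p ∈ Set.Ioc 1 R ×ˢ Set.Ioc 0 R
  · exact Or.inl hpS
  · exact Or.inr ⟨hp, hpS⟩

end BernsteinIBP

open BernsteinIBP

set_option maxHeartbeats 2000000 in
/-- The Bernstein-type integration-by-parts identity underlying the
meromorphic continuation of `z ↦ (s-1)^{-z} q^{-2kz}`: for `0 < Re z < 1/(2k)` and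
`f` smooth and compactly supported, both double integrals converge absolutely and
`∫∫ (s-1)^{-z} q^{-2kz} f = (-1/𝔟₀(z)) ∫∫ (s-1)^{1-z} q^{2k(1-z)} ∂ₛ∂_q^{2k} f`,
with `𝔟₀(z) = (1-z) ∏_{j=1}^{2k} (j - 2kz)`. -/
theorem bernstein_integration_by_parts
    (k : ℕ) (hk : 1 ≤ k)
    (f : ℝ → ℝ → ℂ)
    (hf : ContDiff ℝ (⊤ : ℕ∞) (fun p : ℝ × ℝ => f p.1 p.2))
    (hfsupp : HasCompactSupport (fun p : ℝ × ℝ => f p.1 p.2))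
    (z : ℂ) (hz0 : 0 < z.re) (hz1 : z.re < 1 / (2 * k)) :
    IntegrableOn
      (fun p : ℝ × ℝ => ((p.1 - 1 : ℝ) : ℂ) ^ (-z) * ((p.2 : ℝ) : ℂ) ^ (-(2 * (k : ℂ)) * z) *
        f p.1 p.2)
      (Set.Ioi (1 : ℝ) ×ˢ Set.Ioi (0 : ℝ)) ∧
    IntegrableOn
      (fun p : ℝ × ℝ => ((p.1 - 1 : ℝ) : ℂ) ^ (1 - z) *
        ((p.2 : ℝ) : ℂ) ^ (2 * (k : ℂ) * (1 - z)) *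
        deriv (fun s : ℝ => iteratedDeriv (2 * k) (fun q : ℝ => f s q) p.2) p.1)
      (Set.Ioi (1 : ℝ) ×ˢ Set.Ioi (0 : ℝ)) ∧
    (∫ s in Set.Ioi (1 : ℝ), ∫ q in Set.Ioi (0 : ℝ),
        ((s - 1 : ℝ) : ℂ) ^ (-z) * ((q : ℝ) : ℂ) ^ (-(2 * (k : ℂ)) * z) * f s q) =
      (-1 / ((1 - z) * ∏ j ∈ Finset.Icc 1 (2 * k), ((j : ℂ) - 2 * (k : ℂ) * z))) *
        ∫ s in Set.Ioi (1 : ℝ), ∫ q in Set.Ioi (0 : ℝ),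
          ((s - 1 : ℝ) : ℂ) ^ (1 - z) * ((q : ℝ) : ℂ) ^ (2 * (k : ℂ) * (1 - z)) *
            deriv (fun s' : ℝ => iteratedDeriv (2 * k) (fun q' : ℝ => f s' q') q) s := by
  have hk2 : (0:ℝ) < 2 * k := by positivity
  have hkR : (1:ℝ) ≤ (k:ℝ) := by exact_mod_cast hk
  have hzre1 : z.re * (2 * k) < 1 := (lt_div_iff₀ hk2).mp hz1
  have hzlt1 : z.re < 1 := by nlinarith
  have hf' : ContDiff ℝ ((⊤:ℕ∞) : WithTop ℕ∞) (fun p : ℝ × ℝ => f p.1 p.2) := hf.of_le (by simp)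
  -- real parts
  have hre2 : (-(2 * (k:ℂ)) * z).re = -(2 * (k:ℝ) * z.re) := by
    simp [Complex.mul_re]
  have hre3 : (2 * (k:ℂ) * (1 - z)).re = 2 * (k:ℝ) * (1 - z.re) := by
    simp [Complex.mul_re, Complex.sub_re]
  have hre5 : ∀ j : ℕ, ((j:ℂ) - 2 * (k:ℂ) * z).re = (j:ℝ) - 2 * (k:ℝ) * z.re := by
    intro j; simp [Complex.sub_re, Complex.mul_re]
  have hα1 : -1 < (-z).re := by simp; linarith
  have hβ1 : -1 < (-(2 * (k:ℂ)) * z).re := by rw [hre2]; nlinarith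
  have hα2 : -1 < (1 - z).re := by simp [Complex.sub_re]; linarith
  have hβ2 : -1 < (2 * (k:ℂ) * (1 - z)).re := by rw [hre3]; nlinarith
  have h1mz : (0:ℝ) < (1 - z).re := by simp [Complex.sub_re]; linarith
  -- the iterated partial derivative in the second variable
  have hFc : ContDiff ℝ ((⊤:ℕ∞) : WithTop ℕ∞)
      (fun p : ℝ × ℝ => iteratedDeriv (2 * k) (fun q : ℝ => f p.1 q) p.2) :=
    iterDeriv_snd_contDiff (2 * k) (fun p : ℝ × ℝ => f p.1 p.2) hf'
  have hFs : HasCompactSupport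
      (fun p : ℝ × ℝ => iteratedDeriv (2 * k) (fun q : ℝ => f p.1 q) p.2) :=
    iterDeriv_snd_support (2 * k) (fun p : ℝ × ℝ => f p.1 p.2) hfsupp
  have hGc : ContDiff ℝ ((⊤:ℕ∞) : WithTop ℕ∞)
      (fun p : ℝ × ℝ => deriv (fun s : ℝ =>
        iteratedDeriv (2 * k) (fun q : ℝ => f s q) p.2) p.1) :=
    pderiv_fst_contDiff (fun p : ℝ × ℝ => iteratedDeriv (2 * k) (fun q : ℝ => f p.1 q) p.2) hFc
  have hGs : HasCompactSupport
      (fun p : ℝ × ℝ => deriv (fun s : ℝ =>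
        iteratedDeriv (2 * k) (fun q : ℝ => f s q) p.2) p.1) :=
    pderiv_fst_support (fun p : ℝ × ℝ => iteratedDeriv (2 * k) (fun q : ℝ => f p.1 q) p.2) hFs
  have part1 : IntegrableOn
      (fun p : ℝ × ℝ => ((p.1 - 1 : ℝ) : ℂ) ^ (-z) * ((p.2 : ℝ) : ℂ) ^ (-(2 * (k : ℂ)) * z) *
        f p.1 p.2) (Set.Ioi (1 : ℝ) ×ˢ Set.Ioi (0 : ℝ)) :=
    int2d (-z) (-(2 * (k:ℂ)) * z) hα1 hβ1 hf.continuous hfsupp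
  have part2 : IntegrableOn
      (fun p : ℝ × ℝ => ((p.1 - 1 : ℝ) : ℂ) ^ (1 - z) *
        ((p.2 : ℝ) : ℂ) ^ (2 * (k : ℂ) * (1 - z)) *
        deriv (fun s : ℝ => iteratedDeriv (2 * k) (fun q : ℝ => f s q) p.2) p.1)
      (Set.Ioi (1 : ℝ) ×ˢ Set.Ioi (0 : ℝ)) :=
    int2d (1 - z) (2 * (k:ℂ) * (1 - z)) hα2 hβ2 hGc.continuous hGs
  refine ⟨part1, part2, ?_⟩
  set C : ℂ := ∏ j ∈ Finset.Icc 1 (2 * k), ((j : ℂ) - 2 * (k : ℂ) * z) with hCdef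
  -- measure bookkeeping
  have hmeq : (volume.restrict (Set.Ioi (1:ℝ))).prod (volume.restrict (Set.Ioi (0:ℝ)))
      = (volume : Measure (ℝ × ℝ)).restrict (Set.Ioi (1:ℝ) ×ˢ Set.Ioi (0:ℝ)) := by
    rw [Measure.prod_restrict, ← Measure.volume_eq_prod]
  -- slices
  have hFslice_c : ∀ q : ℝ, ContDiff ℝ ((⊤:ℕ∞) : WithTop ℕ∞)
      (fun s : ℝ => iteratedDeriv (2 * k) (fun q' : ℝ => f s q') q) :=
    fun q => slice_fst_contDiff (fun p : ℝ × ℝ => iteratedDeriv (2 * k) (fun q' : ℝ => f p.1 q') p.2) hFc q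
  have hFslice_s : ∀ q : ℝ, HasCompactSupport
      (fun s : ℝ => iteratedDeriv (2 * k) (fun q' : ℝ => f s q') q) :=
    fun q => slice_fst_support (fun p : ℝ × ℝ => iteratedDeriv (2 * k) (fun q' : ℝ => f p.1 q') p.2) hFs q
  have hfslice_c : ∀ s : ℝ, ContDiff ℝ ((⊤:ℕ∞) : WithTop ℕ∞) (fun q : ℝ => f s q) :=
    fun s => slice_snd_contDiff (fun p : ℝ × ℝ => f p.1 p.2) hf' s
  have hfslice_s : ∀ s : ℝ, HasCompactSupport (fun q : ℝ => f s q) :=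
    fun s => slice_snd_support (fun p : ℝ × ℝ => f p.1 p.2) hfsupp s
  -- step 1 : s-integration by parts for fixed q
  have hstep1 : ∀ q : ℝ,
      (∫ s in Set.Ioi (1:ℝ), ((s - 1 : ℝ) : ℂ) ^ (1 - z) *
        ((q : ℝ) : ℂ) ^ (2 * (k : ℂ) * (1 - z)) *
        deriv (fun s' : ℝ => iteratedDeriv (2 * k) (fun q' : ℝ => f s' q') q) s)
      = -(1 - z) * ∫ s in Set.Ioi (1:ℝ), ((s - 1 : ℝ) : ℂ) ^ (-z) *
          (((q : ℝ) : ℂ) ^ (2 * (k : ℂ) * (1 - z)) *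
            iteratedDeriv (2 * k) (fun q' : ℝ => f s q') q) := by
    intro q
    have hg : ContDiff ℝ ((⊤:ℕ∞) : WithTop ℕ∞) (fun s : ℝ =>
        ((q : ℝ) : ℂ) ^ (2 * (k : ℂ) * (1 - z)) *
          iteratedDeriv (2 * k) (fun q' : ℝ => f s q') q) :=
      contDiff_const.mul (hFslice_c q)
    have hgs : HasCompactSupport (fun s : ℝ =>
        ((q : ℝ) : ℂ) ^ (2 * (k : ℂ) * (1 - z)) *
          iteratedDeriv (2 * k) (fun q' : ℝ => f s q') q) :=
      (hFslice_s q).mul_left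
    have h := ibp 1 (1 - z) h1mz hg hgs
    rw [show (1:ℂ) - z - 1 = -z by ring] at h
    rw [← h]
    congr 1
    funext s
    rw [deriv_const_mul _ (((hFslice_c q).differentiable (by simp)) s)]
    ring
  -- step 2 : q-iterated integration by parts for fixed s
  have harg : ((2 * k : ℕ) : ℝ) - 1 < (2 * (k:ℂ) * (1 - z)).re := by
    rw [hre3]; push_cast; nlinarith
  have hstep2 : ∀ s : ℝ,
      (∫ q in Set.Ioi (0:ℝ), ((s - 1 : ℝ) : ℂ) ^ (-z) *
          (((q : ℝ) : ℂ) ^ (2 * (k : ℂ) * (1 - z)) *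
            iteratedDeriv (2 * k) (fun q' : ℝ => f s q') q))
      = C * (((s - 1 : ℝ) : ℂ) ^ (-z) *
          ∫ q in Set.Ioi (0:ℝ), ((q : ℝ) : ℂ) ^ (-(2 * (k : ℂ)) * z) * f s q) := by
    intro s
    rw [integral_const_mul]
    have hiter := iter_ibp (2 * k) (2 * (k:ℂ) * (1 - z)) harg (hfslice_c s) (hfslice_s s)
    have hexp2 : 2 * (k:ℂ) * (1 - z) - ((2 * k : ℕ) : ℂ) = -(2 * (k:ℂ)) * z := by
      push_cast; ring
    have hcoef : ((-1:ℂ)) ^ (2 * k) *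
        ∏ j ∈ Finset.Icc 1 (2 * k), (2 * (k:ℂ) * (1 - z) - ((2 * k : ℕ) : ℂ) + (j : ℂ)) = C := by
      rw [Even.neg_one_pow (even_two_mul k), one_mul, hCdef]
      exact Finset.prod_congr rfl fun j hj => by push_cast; ring
    rw [hexp2] at hiter
    rw [hiter, ← hexp2, hcoef]
    ring
  -- step 3 : reassemble the constant inside the q-integral
  have hstep3 : ∀ s : ℝ,
      ((s - 1 : ℝ) : ℂ) ^ (-z) *
          (∫ q in Set.Ioi (0:ℝ), ((q : ℝ) : ℂ) ^ (-(2 * (k : ℂ)) * z) * f s q)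
        = ∫ q in Set.Ioi (0:ℝ), ((s - 1 : ℝ) : ℂ) ^ (-z) *
            ((q : ℝ) : ℂ) ^ (-(2 * (k : ℂ)) * z) * f s q := by
    intro s
    rw [← integral_const_mul]
    congr 1; funext q; ring
  -- integrability for the two Fubini swaps
  have hint2 : Integrable (Function.uncurry fun s q : ℝ =>
      ((s - 1 : ℝ) : ℂ) ^ (1 - z) * ((q : ℝ) : ℂ) ^ (2 * (k : ℂ) * (1 - z)) *
        deriv (fun s' : ℝ => iteratedDeriv (2 * k) (fun q' : ℝ => f s' q') q) s)
      ((volume.restrict (Set.Ioi (1:ℝ))).prod (volume.restrict (Set.Ioi (0:ℝ)))) := by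
    rw [hmeq]; exact part2
  have base : IntegrableOn (fun p : ℝ × ℝ => ((p.1 - 1 : ℝ) : ℂ) ^ (-z) *
      ((p.2 : ℝ) : ℂ) ^ (2 * (k : ℂ) * (1 - z)) *
      iteratedDeriv (2 * k) (fun q' : ℝ => f p.1 q') p.2)
      (Set.Ioi (1 : ℝ) ×ˢ Set.Ioi (0 : ℝ)) :=
    int2d (-z) (2 * (k:ℂ) * (1 - z)) hα1 hβ2 hFc.continuous hFs
  have hint3 : Integrable (Function.uncurry fun q s : ℝ =>
      ((s - 1 : ℝ) : ℂ) ^ (-z) * (((q : ℝ) : ℂ) ^ (2 * (k : ℂ) * (1 - z)) *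
        iteratedDeriv (2 * k) (fun q' : ℝ => f s q') q))
      ((volume.restrict (Set.Ioi (0:ℝ))).prod (volume.restrict (Set.Ioi (1:ℝ)))) := by
    have base' : Integrable (fun p : ℝ × ℝ => ((p.1 - 1 : ℝ) : ℂ) ^ (-z) *
        ((p.2 : ℝ) : ℂ) ^ (2 * (k : ℂ) * (1 - z)) *
        iteratedDeriv (2 * k) (fun q' : ℝ => f p.1 q') p.2)
        ((volume.restrict (Set.Ioi (1:ℝ))).prod (volume.restrict (Set.Ioi (0:ℝ)))) := by
      rw [hmeq]; exact base
    have hsw := base'.swap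
    refine hsw.congr (ae_of_all _ fun p => ?_)
    simp only [Function.comp_apply, Function.uncurry_def, Prod.snd_swap, Prod.fst_swap]
    ring
  -- the chain of equalities
  have hchain : (∫ s in Set.Ioi (1 : ℝ), ∫ q in Set.Ioi (0 : ℝ),
        ((s - 1 : ℝ) : ℂ) ^ (1 - z) * ((q : ℝ) : ℂ) ^ (2 * (k : ℂ) * (1 - z)) *
          deriv (fun s' : ℝ => iteratedDeriv (2 * k) (fun q' : ℝ => f s' q') q) s)
      = -(1 - z) * (C * ∫ s in Set.Ioi (1 : ℝ), ∫ q in Set.Ioi (0 : ℝ),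
          ((s - 1 : ℝ) : ℂ) ^ (-z) * ((q : ℝ) : ℂ) ^ (-(2 * (k : ℂ)) * z) * f s q) := by
    rw [integral_integral_swap hint2]
    rw [show (fun q : ℝ => ∫ s in Set.Ioi (1:ℝ), ((s - 1 : ℝ) : ℂ) ^ (1 - z) *
        ((q : ℝ) : ℂ) ^ (2 * (k : ℂ) * (1 - z)) *
        deriv (fun s' : ℝ => iteratedDeriv (2 * k) (fun q' : ℝ => f s' q') q) s)
      = (fun q : ℝ => -(1 - z) * ∫ s in Set.Ioi (1:ℝ), ((s - 1 : ℝ) : ℂ) ^ (-z) *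
          (((q : ℝ) : ℂ) ^ (2 * (k : ℂ) * (1 - z)) *
            iteratedDeriv (2 * k) (fun q' : ℝ => f s q') q)) from funext hstep1]
    rw [integral_const_mul]
    rw [integral_integral_swap hint3]
    rw [show (fun s : ℝ => ∫ q in Set.Ioi (0:ℝ), ((s - 1 : ℝ) : ℂ) ^ (-z) *
        (((q : ℝ) : ℂ) ^ (2 * (k : ℂ) * (1 - z)) *
          iteratedDeriv (2 * k) (fun q' : ℝ => f s q') q))
      = (fun s : ℝ => C * (((s - 1 : ℝ) : ℂ) ^ (-z) *
          ∫ q in Set.Ioi (0:ℝ), ((q : ℝ) : ℂ) ^ (-(2 * (k : ℂ)) * z) * f s q)) from funext hstep2]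
    rw [integral_const_mul]
    rw [show (fun s : ℝ => ((s - 1 : ℝ) : ℂ) ^ (-z) *
        ∫ q in Set.Ioi (0:ℝ), ((q : ℝ) : ℂ) ^ (-(2 * (k : ℂ)) * z) * f s q)
      = (fun s : ℝ => ∫ q in Set.Ioi (0:ℝ), ((s - 1 : ℝ) : ℂ) ^ (-z) *
          ((q : ℝ) : ℂ) ^ (-(2 * (k : ℂ)) * z) * f s q) from funext hstep3]
  have hne1 : (1 - z) ≠ 0 := by
    intro hcon
    have := congrArg Complex.re hcon
    simp [Complex.sub_re] at this
    linarith
  have hneC : C ≠ 0 := by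
    rw [hCdef]
    apply Finset.prod_ne_zero_iff.mpr
    intro j hj
    intro hcon
    have hj1 : 1 ≤ j := (Finset.mem_Icc.mp hj).1
    have := congrArg Complex.re hcon
    rw [hre5 j, Complex.zero_re] at this
    have hj1' : (1:ℝ) ≤ (j:ℝ) := by exact_mod_cast hj1
    nlinarith
  rw [hchain]
  field_simp
end
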